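/- Let m = 2k+1 be odd with m divisible by 3 and m ≥ 15, and define t_1 = 3k/4 if k ≡ 0 (mod 4), t_1 = (k-1)/4 if k ≡ 1 (mod 4), t_1 = (7k+2)/4 if k ≡ 2 (mod 4), and t_1 = (5k+1)/4 if k ≡ 3 (mod 4). Then gcd(m, t_1) = 3. -/

import Mathlib

/-! In each of the four cases `8 t₁ + 3` is a multiple of `m = 2k + 1` (namely `3m`, `m`, `7m`,
`5m`), so every common divisor of `m` and `t₁` divides `3`; conversely `3 ∣ m ∣ 8 t₁ + 3` forces
`3 ∣ t₁`. -/

theorem Nat.gcd_eq_of_dvd_mul_add {m t a d : ℕ} (hm : m ∣ a * t + d) (hd : d ∣ m)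
    (had : d.Coprime a) : Nat.gcd m t = d := by
  have hgcd_dvd : Nat.gcd m t ∣ d :=
    (Nat.dvd_add_right ((Nat.gcd_dvd_right m t).mul_left a)).mp
      ((Nat.gcd_dvd_left m t).trans hm)
  have hd_dvd_t : d ∣ t :=
    had.dvd_of_dvd_mul_left <| (Nat.dvd_add_left (dvd_refl d)).mp (hd.trans hm)
  exact Nat.dvd_antisymm hgcd_dvd (Nat.dvd_gcd hd hd_dvd_t)

theorem dvd_eight_mul_add_three_of_cases {k t₁ : ℕ}
    (ht : (k % 4 = 0 ∧ t₁ = 3 * k / 4) ∨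
          (k % 4 = 1 ∧ t₁ = (k - 1) / 4) ∨
          (k % 4 = 2 ∧ t₁ = (7 * k + 2) / 4) ∨
          (k % 4 = 3 ∧ t₁ = (5 * k + 1) / 4)) :
    2 * k + 1 ∣ 8 * t₁ + 3 := by
  rcases ht with ⟨hk, rfl⟩ | ⟨hk, rfl⟩ | ⟨hk, rfl⟩ | ⟨hk, rfl⟩
  · exact ⟨3, by omega⟩
  · exact ⟨1, by omega⟩
  · exact ⟨7, by omega⟩
  · exact ⟨5, by omega⟩

theorem gcd_m_t1_eq_three (k t₁ : ℕ) (h3 : 3 ∣ (2 * k + 1))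
    (ht : (k % 4 = 0 ∧ t₁ = 3 * k / 4) ∨
          (k % 4 = 1 ∧ t₁ = (k - 1) / 4) ∨
          (k % 4 = 2 ∧ t₁ = (7 * k + 2) / 4) ∨
          (k % 4 = 3 ∧ t₁ = (5 * k + 1) / 4)) :
    Nat.gcd (2 * k + 1) t₁ = 3 :=
  Nat.gcd_eq_of_dvd_mul_add (dvd_eight_mul_add_three_of_cases ht) h3 (by norm_num)
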